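/- Assume a is weakly degenerate (WD) or strongly degenerate (SD), with K ∈ (0,2). Let u ∈ K²_a(0,1), i.e. u ∈ H¹(0,1) with u(0) = 0, u' absolutely continuous on [0,1] if a is (WD) (locally absolutely continuous on (0,1] if a is (SD)), and √a·u'' ∈ L²(0,1). Then, with ‖u‖²_{2,∘} := |u'(1)|² + ‖√a u''‖²_{L²(0,1)}, the following hold: (i) ‖u‖²_{L²(0,1)} ≤ ‖u'‖²_{L²(0,1)} ≤ 2·( |u'(1)|² + ‖√a u''‖²_{L²(0,1)}/(a(1)(2−K)) ) ≤ 2·max{1, 1/(a(1)(2−K))}·‖u‖²_{2,∘}; (ii) ‖u‖²₂ ≤ max{2, 1 + 2/(a(1)(2−K))}·‖u‖²_{2,∘}; (iii) ‖u‖²_{2,a} ≤ max{4, 4/(a(1)(2−K)) + 1}·‖u‖²_{2,∘}. In particular the norms ‖·‖_{2,a}, ‖·‖₂ and ‖·‖_{2,∘} are equivalent on K²_a(0,1). -/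

import Mathlib

open Set Filter MeasureTheory Topology


lemma cs_integral {μ : Measure ℝ} {f g : ℝ → ℝ}
    (hfm : AEStronglyMeasurable f μ) (hgm : AEStronglyMeasurable g μ)
    (hf2 : Integrable (fun x => f x ^ 2) μ) (hg2 : Integrable (fun x => g x ^ 2) μ) :
    (∫ x, f x * g x ∂μ) ^ 2 ≤ (∫ x, f x ^ 2 ∂μ) * (∫ x, g x ^ 2 ∂μ) := by
  have hf : MemLp f 2 μ := (memLp_two_iff_integrable_sq hfm).2 hf2
  have hg : MemLp g 2 μ := (memLp_two_iff_integrable_sq hgm).2 hg2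
  have h2 : (2:ℝ).HolderConjugate 2 := ⟨by norm_num, by norm_num, by norm_num⟩
  have key := MeasureTheory.integral_mul_norm_le_Lp_mul_Lq h2
    (by simpa using hf) (by simpa using hg)
  have e1 : ∀ h : ℝ → ℝ, (∫ x, ‖h x‖ ^ (2:ℝ) ∂μ) = ∫ x, h x ^ 2 ∂μ := by
    intro h
    refine integral_congr_ae (Eventually.of_forall fun x => ?_)
    show ‖h x‖ ^ (2:ℝ) = h x ^ 2
    rw [show ((2:ℝ) = ((2:ℕ):ℝ)) by norm_num, Real.rpow_natCast]
    simp [sq_abs]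
  rw [e1 f, e1 g] at key
  have h1 : |∫ x, f x * g x ∂μ| ≤ ∫ x, ‖f x‖ * ‖g x‖ ∂μ := by
    simpa [Real.norm_eq_abs, abs_mul] using
      norm_integral_le_integral_norm (μ := μ) (fun x => f x * g x)
  have hP : 0 ≤ ∫ x, f x ^ 2 ∂μ := integral_nonneg fun x => sq_nonneg _
  have hQ : 0 ≤ ∫ x, g x ^ 2 ∂μ := integral_nonneg fun x => sq_nonneg _
  have h3 : ((∫ x, f x ^ 2 ∂μ) ^ ((1:ℝ)/2) * (∫ x, g x ^ 2 ∂μ) ^ ((1:ℝ)/2)) ^ 2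
      = (∫ x, f x ^ 2 ∂μ) * (∫ x, g x ^ 2 ∂μ) := by
    rw [mul_pow, ← Real.rpow_natCast (_ ^ ((1:ℝ)/2)) 2, ← Real.rpow_natCast (_ ^ ((1:ℝ)/2)) 2,
      ← Real.rpow_mul hP, ← Real.rpow_mul hQ]
    norm_num
  calc (∫ x, f x * g x ∂μ) ^ 2 = |∫ x, f x * g x ∂μ| ^ 2 := (sq_abs _).symm
    _ ≤ ((∫ x, f x ^ 2 ∂μ) ^ ((1:ℝ)/2) * (∫ x, g x ^ 2 ∂μ) ^ ((1:ℝ)/2)) ^ 2 := by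
        apply pow_le_pow_left₀ (abs_nonneg _) (h1.trans key)
    _ = _ := h3

lemma aux_growth {a a' : ℝ → ℝ} {K : ℝ}
    (hcont : ContinuousOn a (Set.Icc 0 1))
    (hda : ∀ t ∈ Set.Ioo (0:ℝ) 1, HasDerivAt a (a' t) t)
    (hbd : ∀ x ∈ Set.Ioc (0:ℝ) 1, x * |a' x| ≤ K * a x) :
    ∀ x ∈ Set.Ioc (0:ℝ) 1, a 1 * x ^ K ≤ a x := by
  rintro x ⟨hx0, hx1⟩
  rcases eq_or_lt_of_le hx1 with rfl | hx1
  · simp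
  have hfc : ContinuousOn (fun t => a t * t ^ (-K)) (Set.Icc x 1) := by
    refine ContinuousOn.mul (hcont.mono (Set.Icc_subset_Icc hx0.le le_rfl)) ?_
    intro t ht
    exact (Real.continuousAt_rpow_const t (-K)
      (Or.inl (ne_of_gt (lt_of_lt_of_le hx0 ht.1)))).continuousWithinAt
  have hanti : AntitoneOn (fun t => a t * t ^ (-K)) (Set.Icc x 1) := by
    refine antitoneOn_of_hasDerivWithinAt_nonpos (convex_Icc x 1) hfc
      (f' := fun t => a' t * t ^ (-K) + a t * (-K * t ^ (-K - 1))) ?_ ?_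
    · intro t ht
      rw [interior_Icc] at ht
      have ht0 : (0:ℝ) < t := lt_trans hx0 ht.1
      exact (((hda t ⟨ht0, ht.2⟩).mul
        (Real.hasDerivAt_rpow_const (Or.inl (ne_of_gt ht0)))).hasDerivWithinAt)
    · intro t ht
      rw [interior_Icc] at ht
      have ht0 : (0:ℝ) < t := lt_trans hx0 ht.1
      have hb := hbd t ⟨ht0, ht.2.le⟩
      have h1 : t ^ (-K) = t * t ^ (-K - 1) := by
        have h := Real.rpow_add ht0 1 (-K - 1)
        rw [show (1:ℝ) + (-K - 1) = -K by ring] at h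
        simpa using h
      have hp : 0 < t ^ (-K - 1) := Real.rpow_pos_of_pos ht0 _
      have habs : t * a' t ≤ t * |a' t| :=
        mul_le_mul_of_nonneg_left (le_abs_self _) ht0.le
      have h2 : t * a' t ≤ K * a t := habs.trans hb
      show a' t * t ^ (-K) + a t * (-K * t ^ (-K - 1)) ≤ 0
      rw [h1]
      nlinarith [mul_le_mul_of_nonneg_right h2 hp.le]
  have hkey := hanti (Set.left_mem_Icc.2 hx1.le) (Set.right_mem_Icc.2 hx1.le) hx1.le
  have h2 : a 1 ≤ a x * x ^ (-K) := by simpa using hkey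
  have h3 : (0:ℝ) < x ^ K := Real.rpow_pos_of_pos hx0 K
  have h4 : x ^ (-K) * x ^ K = 1 := by
    rw [← Real.rpow_add hx0]; simp
  have h5 := mul_le_mul_of_nonneg_right h2 h3.le
  rw [mul_assoc, h4, mul_one] at h5
  linarith

lemma aux_F_hasDeriv {K : ℝ} :
    ∀ x : ℝ, 0 < x → HasDerivAt (fun y => ∫ t in y..1, t ^ (-K)) (-(x ^ (-K))) x := by
  intro x hx
  have hm : Measurable (fun t : ℝ => t ^ (-K)) := by
    exact (measurable_id.pow_const _)
  have hcontOn : ContinuousOn (fun t : ℝ => t ^ (-K)) (Set.uIcc 1 x) := by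
    intro t ht
    have ht0 : 0 < t := lt_of_lt_of_le (lt_min one_pos hx) ht.1
    exact (Real.continuousAt_rpow_const t (-K) (Or.inl ht0.ne')).continuousWithinAt
  have hint : IntervalIntegrable (fun t : ℝ => t ^ (-K)) volume 1 x :=
    hcontOn.intervalIntegrable
  have hG : HasDerivAt (fun y => ∫ t in (1:ℝ)..y, t ^ (-K)) (x ^ (-K)) x :=
    intervalIntegral.integral_hasDerivAt_right hint
      (hm.stronglyMeasurable.stronglyMeasurableAtFilter)
      (Real.continuousAt_rpow_const x (-K) (Or.inl hx.ne'))
  have heq : (fun y => ∫ t in y..1, t ^ (-K)) = fun y => -∫ t in (1:ℝ)..y, t ^ (-K) := by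
    funext y
    rw [← intervalIntegral.integral_symm]
  rw [heq]
  exact hG.neg

lemma aux_F_nonneg {K : ℝ} {x : ℝ} (hx0 : 0 < x) (hx1 : x ≤ 1) :
    0 ≤ ∫ t in x..1, t ^ (-K) :=
  intervalIntegral.integral_nonneg hx1
    (fun t ht => Real.rpow_nonneg (le_trans hx0.le ht.1) _)

lemma aux_F_integral {K : ℝ} (hK2 : K < 2) {ε : ℝ} (hε0 : 0 < ε) (hε1 : ε < 1) :
    ∫ x in Set.Ioo ε 1, (∫ t in x..1, t ^ (-K)) ≤ 1 / (2 - K) := by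
  have h2K : (0:ℝ) < 2 - K := by linarith
  set F : ℝ → ℝ := fun x => ∫ t in x..1, t ^ (-K) with hF
  set H : ℝ → ℝ := fun x => x * F x + x ^ (2 - K) / (2 - K) with hH
  have hHd : ∀ x ∈ Set.uIcc ε 1, HasDerivAt H (F x) x := by
    intro x hx
    rw [Set.uIcc_of_le hε1.le] at hx
    have hx0 : 0 < x := lt_of_lt_of_le hε0 hx.1
    have h1 : HasDerivAt (fun y => y * F y) (1 * F x + x * -(x ^ (-K))) x :=
      (hasDerivAt_id x).mul (aux_F_hasDeriv x hx0)
    have h2 : HasDerivAt (fun y : ℝ => y ^ (2 - K) / (2 - K))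
        ((2 - K) * x ^ (2 - K - 1) / (2 - K)) x :=
      (Real.hasDerivAt_rpow_const (Or.inl hx0.ne')).div_const _
    have h3 : HasDerivAt (fun y => y * F y + y ^ (2 - K) / (2 - K))
        (1 * F x + x * -(x ^ (-K)) + (2 - K) * x ^ (2 - K - 1) / (2 - K)) x := h1.add h2
    convert h3 using 1
    have e1 : x ^ (2 - K - 1) = x * x ^ (-K) := by
      have h := Real.rpow_add hx0 1 (-K)
      rw [show (1:ℝ) + (-K) = 2 - K - 1 by ring] at h
      simpa using h
    rw [e1]
    field_simp
    ring
  have hFi : IntervalIntegrable F volume ε 1 := by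
    apply ContinuousOn.intervalIntegrable
    intro x hx
    rw [Set.uIcc_of_le hε1.le] at hx
    exact ((aux_F_hasDeriv x (lt_of_lt_of_le hε0 hx.1)).continuousAt).continuousWithinAt
  have key : ∫ x in ε..1, F x = H 1 - H ε :=
    intervalIntegral.integral_eq_sub_of_hasDerivAt hHd hFi
  have hH1 : H 1 = 1 / (2 - K) := by
    simp [hH, hF, intervalIntegral.integral_same, Real.one_rpow]
  have hHε : 0 ≤ H ε := by
    have := aux_F_nonneg (K := K) hε0 hε1.le
    have := Real.rpow_pos_of_pos hε0 (2 - K)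
    positivity
  rw [← MeasureTheory.integral_Ioc_eq_integral_Ioo, ← intervalIntegral.integral_of_le hε1.le]
  rw [key, hH1]
  exact sub_le_self _ hHε

lemma aux_sq {a : ℝ → ℝ} {K : ℝ} {u'' : ℝ → ℝ}
    (hcont : ContinuousOn a (Set.Icc 0 1))
    (hpos : ∀ x ∈ Set.Ioc (0:ℝ) 1, 0 < a x)
    (hinv : ∀ t ∈ Set.Ioo (0:ℝ) 1, (a t)⁻¹ ≤ t ^ (-K) * (a 1)⁻¹)
    (hu''loc : ∀ x ∈ Set.Ioc (0:ℝ) 1, MeasureTheory.IntegrableOn u'' (Set.Icc x 1))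
    (hau'' : MeasureTheory.IntegrableOn (fun x => a x * (u'' x) ^ 2) (Set.Ioo 0 1)) :
    ∀ x ∈ Set.Ioo (0:ℝ) 1, (∫ t in x..1, u'' t) ^ 2 ≤
      (∫ t in x..1, t ^ (-K)) * ((a 1)⁻¹ *
        ∫ t in Set.Ioo (0:ℝ) 1, a t * u'' t ^ 2) := by
  intro x hx
  have hx0 := hx.1
  have hsub1 : Set.Ioo x 1 ⊆ Set.Ioo (0:ℝ) 1 := fun t ht => ⟨lt_trans hx0 ht.1, ht.2⟩
  have hsubIcc : Set.Icc x 1 ⊆ Set.Ioc (0:ℝ) 1 := fun t ht => ⟨lt_of_lt_of_le hx0 ht.1, ht.2⟩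
  have haposIcc : ∀ t ∈ Set.Icc x 1, 0 < a t := fun t ht => hpos t (hsubIcc ht)
  have hacont : ContinuousOn a (Set.Icc x 1) := hcont.mono (Set.Icc_subset_Icc hx0.le le_rfl)
  set f : ℝ → ℝ := fun t => (Real.sqrt (a t))⁻¹ with hfdef
  set g : ℝ → ℝ := fun t => Real.sqrt (a t) * u'' t with hgdef
  have hsqc : ContinuousOn (fun t => Real.sqrt (a t)) (Set.Icc x 1) :=
    Real.continuous_sqrt.comp_continuousOn hacont
  have hfc : ContinuousOn f (Set.Icc x 1) := by
    apply hsqc.inv₀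
    intro t ht
    exact (Real.sqrt_pos.2 (haposIcc t ht)).ne'
  have hu''m : AEStronglyMeasurable u'' (volume.restrict (Set.Ioo x 1)) :=
    ((hu''loc x ⟨hx0, hx.2.le⟩).aestronglyMeasurable).mono_measure
      (Measure.restrict_mono Set.Ioo_subset_Icc_self le_rfl)
  have hfm : AEStronglyMeasurable f (volume.restrict (Set.Ioo x 1)) :=
    (hfc.mono Set.Ioo_subset_Icc_self).aestronglyMeasurable measurableSet_Ioo
  have hgm : AEStronglyMeasurable g (volume.restrict (Set.Ioo x 1)) :=
    (((hsqc.mono Set.Ioo_subset_Icc_self).aestronglyMeasurable measurableSet_Ioo)).mul hu''m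
  have hf2 : IntegrableOn (fun t => f t ^ 2) (Set.Ioo x 1) :=
    ((hfc.pow 2).integrableOn_Icc).mono_set Set.Ioo_subset_Icc_self
  have hg2 : IntegrableOn (fun t => g t ^ 2) (Set.Ioo x 1) := by
    apply ((hau''.mono_set hsub1).congr_fun ?_ measurableSet_Ioo)
    intro t ht
    have h0 : (0:ℝ) ≤ a t := (hpos t ⟨lt_trans hx0 ht.1, ht.2.le⟩).le
    simp only [hgdef, mul_pow, Real.sq_sqrt h0]
  have hCS := cs_integral hfm hgm hf2 hg2
  have hfg : ∫ t in Set.Ioo x 1, f t * g t = ∫ t in Set.Ioo x 1, u'' t := by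
    apply setIntegral_congr_fun measurableSet_Ioo
    intro t ht
    have h0 : 0 < a t := hpos t ⟨lt_trans hx0 ht.1, ht.2.le⟩
    have hne : Real.sqrt (a t) ≠ 0 := (Real.sqrt_pos.2 h0).ne'
    simp only [hfdef, hgdef]
    field_simp
  -- bound on ∫ f²
  have hainv : IntegrableOn (fun t => (a t)⁻¹) (Set.Ioo x 1) := by
    refine ((hacont.inv₀ ?_).integrableOn_Icc).mono_set Set.Ioo_subset_Icc_self
    exact fun t ht => (haposIcc t ht).ne'
  have hrpc : ContinuousOn (fun t : ℝ => t ^ (-K) * (a 1)⁻¹) (Set.Icc x 1) := by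
    apply ContinuousOn.mul ?_ continuousOn_const
    intro t ht
    exact (Real.continuousAt_rpow_const t (-K)
      (Or.inl (ne_of_gt (lt_of_lt_of_le hx0 ht.1)))).continuousWithinAt
  have hrpi : IntegrableOn (fun t : ℝ => t ^ (-K) * (a 1)⁻¹) (Set.Ioo x 1) :=
    (hrpc.integrableOn_Icc).mono_set Set.Ioo_subset_Icc_self
  have hfsq : ∫ t in Set.Ioo x 1, f t ^ 2 = ∫ t in Set.Ioo x 1, (a t)⁻¹ := by
    apply setIntegral_congr_fun measurableSet_Ioo
    intro t ht
    have h0 : (0:ℝ) ≤ a t := (hpos t ⟨lt_trans hx0 ht.1, ht.2.le⟩).le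
    simp only [hfdef, inv_pow, Real.sq_sqrt h0]
  have h1 : ∫ t in Set.Ioo x 1, f t ^ 2 ≤ (∫ t in x..1, t ^ (-K)) * (a 1)⁻¹ := by
    rw [hfsq]
    have := setIntegral_mono_on hainv hrpi measurableSet_Ioo
      (fun t ht => hinv t (hsub1 ht))
    rw [intervalIntegral.integral_of_le hx.2.le, MeasureTheory.integral_Ioc_eq_integral_Ioo]
    rwa [integral_mul_const] at this
  have h2 : ∫ t in Set.Ioo x 1, g t ^ 2 ≤ ∫ t in Set.Ioo (0:ℝ) 1, a t * u'' t ^ 2 := by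
    have heq : ∫ t in Set.Ioo x 1, g t ^ 2 = ∫ t in Set.Ioo x 1, a t * u'' t ^ 2 := by
      apply setIntegral_congr_fun measurableSet_Ioo
      intro t ht
      have h0 : (0:ℝ) ≤ a t := (hpos t ⟨lt_trans hx0 ht.1, ht.2.le⟩).le
      simp only [hgdef, mul_pow, Real.sq_sqrt h0]
    rw [heq]
    apply setIntegral_mono_set hau'' ?_ (HasSubset.Subset.eventuallyLE hsub1)
    refine (ae_restrict_iff' measurableSet_Ioo).2 (Eventually.of_forall fun t ht => ?_)
    exact mul_nonneg (hpos t ⟨ht.1, ht.2.le⟩).le (sq_nonneg _)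
  have hIoc : ∫ t in x..1, u'' t = ∫ t in Set.Ioo x 1, u'' t := by
    rw [intervalIntegral.integral_of_le hx.2.le, MeasureTheory.integral_Ioc_eq_integral_Ioo]
  rw [hIoc, ← hfg]
  have ha1 : (0:ℝ) < a 1 := hpos 1 ⟨one_pos, le_rfl⟩
  have hFnn : 0 ≤ ∫ t in x..1, t ^ (-K) := aux_F_nonneg hx0 hx.2.le
  have hg2nn : 0 ≤ ∫ t in Set.Ioo x 1, g t ^ 2 :=
    setIntegral_nonneg measurableSet_Ioo fun t _ => sq_nonneg _
  calc (∫ t in Set.Ioo x 1, f t * g t) ^ 2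
      ≤ (∫ t in Set.Ioo x 1, f t ^ 2) * ∫ t in Set.Ioo x 1, g t ^ 2 := hCS
    _ ≤ ((∫ t in x..1, t ^ (-K)) * (a 1)⁻¹) *
          ∫ t in Set.Ioo (0:ℝ) 1, a t * u'' t ^ 2 :=
        mul_le_mul h1 h2 hg2nn (mul_nonneg hFnn (inv_nonneg.2 ha1.le))
    _ = _ := by ring

lemma aux_lim {f : ℝ → ℝ} (hf : IntegrableOn f (Set.Ioo 0 1)) {M : ℝ}
    (hbdd : ∀ ε : ℝ, 0 < ε → ε < 1 → ∫ x in Set.Ioo ε 1, f x ≤ M) :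
    ∫ x in Set.Ioo (0:ℝ) 1, f x ≤ M := by
  have hmono : Monotone (fun n : ℕ => Set.Ioo ((1:ℝ)/(n+2)) 1) := by
    intro n m hnm
    apply Set.Ioo_subset_Ioo _ le_rfl
    apply one_div_le_one_div_of_le (by positivity)
    have : (n:ℝ) ≤ m := Nat.cast_le.2 hnm
    linarith
  have hunion : ⋃ n : ℕ, Set.Ioo ((1:ℝ)/(n+2)) 1 = Set.Ioo (0:ℝ) 1 := by
    ext y
    simp only [Set.mem_iUnion, Set.mem_Ioo]
    constructor
    · rintro ⟨n, h1, h2⟩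
      exact ⟨lt_trans (by positivity) h1, h2⟩
    · rintro ⟨h1, h2⟩
      obtain ⟨n, hn⟩ := exists_nat_one_div_lt h1
      refine ⟨n, lt_of_le_of_lt ?_ hn, h2⟩
      apply one_div_le_one_div_of_le (by positivity)
      push_cast
      linarith
  have htend := MeasureTheory.tendsto_setIntegral_of_monotone
    (fun _ : ℕ => measurableSet_Ioo) hmono (by rw [hunion]; exact hf)
  rw [hunion] at htend
  refine le_of_tendsto htend (Eventually.of_forall fun n => hbdd _ (by positivity) ?_)
  rw [div_lt_one (by positivity)]
  have : (0:ℝ) ≤ (n:ℝ) := Nat.cast_nonneg n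
  linarith


set_option maxHeartbeats 1000000

/-- `a` is weakly degenerate at `0` (WD): `a ∈ C[0,1] ∩ C¹(0,1]`, `a 0 = 0`,
`a > 0` on `(0,1]`, and the degeneracy constant `K` satisfies `K ∈ (0,1)` together
with `x * |a' x| ≤ K * a x` on `(0,1]`. -/
structure IsWeaklyDegenerate (a a' : ℝ → ℝ) (K : ℝ) : Prop where
  cont : ContinuousOn a (Set.Icc 0 1)
  deriv : ∀ x ∈ Set.Ioc (0:ℝ) 1, HasDerivWithinAt a (a' x) (Set.Ioc 0 1) x
  deriv_cont : ContinuousOn a' (Set.Ioc 0 1)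
  zero : a 0 = 0
  pos : ∀ x ∈ Set.Ioc (0:ℝ) 1, 0 < a x
  K_pos : 0 < K
  K_lt_one : K < 1
  bound : ∀ x ∈ Set.Ioc (0:ℝ) 1, x * |a' x| ≤ K * a x

/-- `a` is strongly degenerate at `0` (SD): `a ∈ C¹[0,1]`, `a 0 = 0`, `a > 0` on
`(0,1]`, and the degeneracy constant `K` satisfies `K ∈ [1,2)` together with
`x * |a' x| ≤ K * a x` on `(0,1]`. -/
structure IsStronglyDegenerate (a a' : ℝ → ℝ) (K : ℝ) : Prop where
  deriv : ∀ x ∈ Set.Icc (0:ℝ) 1, HasDerivWithinAt a (a' x) (Set.Icc 0 1) x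
  deriv_cont : ContinuousOn a' (Set.Icc 0 1)
  zero : a 0 = 0
  pos : ∀ x ∈ Set.Ioc (0:ℝ) 1, 0 < a x
  K_ge_one : 1 ≤ K
  K_lt_two : K < 2
  bound : ∀ x ∈ Set.Ioc (0:ℝ) 1, x * |a' x| ≤ K * a x

/-- norm estimates on `K²_a(0,1)` (functions `u ∈ H¹(0,1)` with
`u(0) = 0` and `√a·u'' ∈ L²(0,1)`), with
`‖u‖²_{2,∘} = |u'(1)|² + ‖√a u''‖²_{L²}`. -/
theorem K2a_norm_estimates
    (a a' : ℝ → ℝ) (K : ℝ)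
    (hdeg : IsWeaklyDegenerate a a' K ∨ IsStronglyDegenerate a a' K)
    (u u' u'' : ℝ → ℝ)
    -- u ∈ H¹(0,1): u absolutely continuous on [0,1] with derivative u' ∈ L²(0,1)
    (huAC : ∀ x ∈ Set.Icc (0:ℝ) 1, ∀ z ∈ Set.Icc (0:ℝ) 1,
      u z - u x = ∫ t in x..z, u' t)
    (hu'L1 : MeasureTheory.IntegrableOn u' (Set.Ioo 0 1))
    (hu'L2 : MeasureTheory.IntegrableOn (fun x => (u' x) ^ 2) (Set.Ioo 0 1))
    (huL2 : MeasureTheory.IntegrableOn (fun x => (u x) ^ 2) (Set.Ioo 0 1))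
    -- boundary condition u(0) = 0
    (hu0 : u 0 = 0)
    -- u' is locally absolutely continuous on (0,1] with a.e. derivative u''
    (hu'AC : ∀ x ∈ Set.Ioc (0:ℝ) 1, ∀ z ∈ Set.Ioc (0:ℝ) 1,
      u' z - u' x = ∫ t in x..z, u'' t)
    (hu''loc : ∀ x ∈ Set.Ioc (0:ℝ) 1, MeasureTheory.IntegrableOn u'' (Set.Icc x 1))
    -- in the (WD) case, u' is absolutely continuous on all of [0,1]
    (hWDcase : IsWeaklyDegenerate a a' K →
      ∀ x ∈ Set.Icc (0:ℝ) 1, ∀ z ∈ Set.Icc (0:ℝ) 1,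
        u' z - u' x = ∫ t in x..z, u'' t)
    -- √a·u'' ∈ L²(0,1)
    (hau'' : MeasureTheory.IntegrableOn (fun x => a x * (u'' x) ^ 2) (Set.Ioo 0 1)) :
    -- (i)
    ((∫ x in Set.Ioo (0:ℝ) 1, (u x) ^ 2 ≤ ∫ x in Set.Ioo (0:ℝ) 1, (u' x) ^ 2) ∧
     (∫ x in Set.Ioo (0:ℝ) 1, (u' x) ^ 2 ≤
        2 * ((u' 1) ^ 2 +
          (∫ x in Set.Ioo (0:ℝ) 1, a x * (u'' x) ^ 2) / (a 1 * (2 - K)))) ∧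
     (2 * ((u' 1) ^ 2 +
          (∫ x in Set.Ioo (0:ℝ) 1, a x * (u'' x) ^ 2) / (a 1 * (2 - K))) ≤
        2 * max 1 (1 / (a 1 * (2 - K))) *
          ((u' 1) ^ 2 + ∫ x in Set.Ioo (0:ℝ) 1, a x * (u'' x) ^ 2))) ∧
    -- (ii)
    ((∫ x in Set.Ioo (0:ℝ) 1, (u x) ^ 2) +
        (∫ x in Set.Ioo (0:ℝ) 1, a x * (u'' x) ^ 2) ≤
      max 2 (1 + 2 / (a 1 * (2 - K))) *
        ((u' 1) ^ 2 + ∫ x in Set.Ioo (0:ℝ) 1, a x * (u'' x) ^ 2)) ∧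
    -- (iii)
    ((∫ x in Set.Ioo (0:ℝ) 1, (u x) ^ 2) + (∫ x in Set.Ioo (0:ℝ) 1, (u' x) ^ 2) +
        (∫ x in Set.Ioo (0:ℝ) 1, a x * (u'' x) ^ 2) ≤
      max 4 (4 / (a 1 * (2 - K)) + 1) *
        ((u' 1) ^ 2 + ∫ x in Set.Ioo (0:ℝ) 1, a x * (u'' x) ^ 2)) ∧
    -- norm equivalence (reverse bound)
    ((u' 1) ^ 2 + (∫ x in Set.Ioo (0:ℝ) 1, a x * (u'' x) ^ 2) ≤
      max (2 / (a 1 * (2 - K)) + 1) 2 *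
        ((∫ x in Set.Ioo (0:ℝ) 1, (u x) ^ 2) + (∫ x in Set.Ioo (0:ℝ) 1, (u' x) ^ 2) +
          (∫ x in Set.Ioo (0:ℝ) 1, a x * (u'' x) ^ 2))) := by
  have hK0 : 0 < K := by
    rcases hdeg with h | h
    · exact h.K_pos
    · linarith [h.K_ge_one]
  have hK2 : K < 2 := by
    rcases hdeg with h | h
    · linarith [h.K_lt_one]
    · exact h.K_lt_two
  have hpos : ∀ x ∈ Set.Ioc (0:ℝ) 1, 0 < a x := by
    rcases hdeg with h | h <;> exact h.pos
  have hbd : ∀ x ∈ Set.Ioc (0:ℝ) 1, x * |a' x| ≤ K * a x := by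
    rcases hdeg with h | h <;> exact h.bound
  have hcont : ContinuousOn a (Set.Icc 0 1) := by
    rcases hdeg with h | h
    · exact h.cont
    · exact fun x hx => (h.deriv x hx).continuousWithinAt
  have hda : ∀ t ∈ Set.Ioo (0:ℝ) 1, HasDerivAt a (a' t) t := by
    rcases hdeg with h | h
    · exact fun t ht => (h.deriv t ⟨ht.1, ht.2.le⟩).hasDerivAt (Ioc_mem_nhds ht.1 ht.2)
    · exact fun t ht => (h.deriv t ⟨ht.1.le, ht.2.le⟩).hasDerivAt (Icc_mem_nhds ht.1 ht.2)
  clear hWDcase hdeg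
  have ha1 : 0 < a 1 := hpos 1 ⟨one_pos, le_rfl⟩
  have h2K : (0:ℝ) < 2 - K := by linarith
  set C := ∫ x in Set.Ioo (0:ℝ) 1, a x * (u'' x) ^ 2 with hCdef
  set B := ∫ x in Set.Ioo (0:ℝ) 1, (u' x) ^ 2 with hBdef
  set A := ∫ x in Set.Ioo (0:ℝ) 1, (u x) ^ 2 with hAdef
  have hCnn : 0 ≤ C := setIntegral_nonneg measurableSet_Ioo
    (fun x hx => mul_nonneg (hpos x ⟨hx.1, hx.2.le⟩).le (sq_nonneg _))
  have hBnn : 0 ≤ B := setIntegral_nonneg measurableSet_Ioo (fun x _ => sq_nonneg _)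
  have hAnn : 0 ≤ A := setIntegral_nonneg measurableSet_Ioo (fun x _ => sq_nonneg _)
  have hEnn : (0:ℝ) ≤ (u' 1) ^ 2 := sq_nonneg _
  -- growth and inverse bound
  have hgrowth := aux_growth hcont hda hbd
  have hinv : ∀ t ∈ Set.Ioo (0:ℝ) 1, (a t)⁻¹ ≤ t ^ (-K) * (a 1)⁻¹ := by
    intro t ht
    have h1 := hgrowth t ⟨ht.1, ht.2.le⟩
    have hat := hpos t ⟨ht.1, ht.2.le⟩
    have htK : (0:ℝ) < t ^ K := Real.rpow_pos_of_pos ht.1 K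
    rw [Real.rpow_neg ht.1.le, ← mul_inv]
    exact inv_anti₀ (by positivity) (by nlinarith)
  have hsq' := aux_sq hcont hpos hinv hu''loc hau''
  rw [← hCdef] at hsq'
  -- volume facts
  have hvol01 : volume (Set.Ioo (0:ℝ) 1) < ⊤ := by
    rw [Real.volume_Ioo]; exact ENNReal.ofReal_lt_top
  -- (H2) B ≤ 2 E + 2 (a1⁻¹ C) (1/(2-K))
  have hB2 : B ≤ 2 * (u' 1) ^ 2 + 2 * ((a 1)⁻¹ * C) * (1 / (2 - K)) := by
    apply aux_lim hu'L2
    intro ε hε0 hε1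
    have hFc : ContinuousOn (fun y => ∫ t in y..1, t ^ (-K)) (Set.Icc ε 1) := fun y hy =>
      ((aux_F_hasDeriv y (lt_of_lt_of_le hε0 hy.1)).continuousAt).continuousWithinAt
    have hFi : IntegrableOn (fun y => ∫ t in y..1, t ^ (-K)) (Set.Ioo ε 1) :=
      (hFc.integrableOn_Icc).mono_set Set.Ioo_subset_Icc_self
    have hvol : volume (Set.Ioo ε 1) < ⊤ := by
      rw [Real.volume_Ioo]; exact ENNReal.ofReal_lt_top
    have hconsti : IntegrableOn (fun _ : ℝ => 2 * (u' 1) ^ 2) (Set.Ioo ε 1) :=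
      integrableOn_const hvol.ne
    have hRi : IntegrableOn (fun y => 2 * (u' 1) ^ 2 + 2 * ((a 1)⁻¹ * C) *
        (∫ t in y..1, t ^ (-K))) (Set.Ioo ε 1) :=
      hconsti.add (hFi.const_mul _)
    have hsubε : Set.Ioo ε 1 ⊆ Set.Ioo (0:ℝ) 1 := fun t ht => ⟨lt_trans hε0 ht.1, ht.2⟩
    have step1 : ∫ y in Set.Ioo ε 1, (u' y) ^ 2 ≤ ∫ y in Set.Ioo ε 1,
        (2 * (u' 1) ^ 2 + 2 * ((a 1)⁻¹ * C) * (∫ t in y..1, t ^ (-K))) := by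
      apply setIntegral_mono_on (hu'L2.mono_set hsubε) hRi measurableSet_Ioo
      intro y hy
      have hy' : y ∈ Set.Ioo (0:ℝ) 1 := hsubε hy
      have hI := hu'AC y ⟨hy'.1, hy'.2.le⟩ 1 ⟨one_pos, le_rfl⟩
      have hq := hsq' y hy'
      have h0 : u' y = u' 1 - ∫ t in y..1, u'' t := by linarith
      rw [h0]
      nlinarith [sq_nonneg (u' 1 + ∫ t in y..1, u'' t), hq]
    have step2 : ∫ y in Set.Ioo ε 1,
        (2 * (u' 1) ^ 2 + 2 * ((a 1)⁻¹ * C) * (∫ t in y..1, t ^ (-K)))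
        = 2 * (u' 1) ^ 2 * (volume (Set.Ioo ε 1)).toReal
          + 2 * ((a 1)⁻¹ * C) * ∫ y in Set.Ioo ε 1, (∫ t in y..1, t ^ (-K)) := by
      rw [integral_add hconsti (hFi.const_mul _), setIntegral_const, measureReal_def, integral_const_mul,
        smul_eq_mul, mul_comm ((volume (Set.Ioo ε 1)).toReal)]
    have hvol1 : (volume (Set.Ioo ε 1)).toReal ≤ 1 := by
      rw [Real.volume_Ioo, ENNReal.toReal_ofReal (by linarith)]
      linarith
    have hJ := aux_F_integral hK2 hε0 hε1
    have hcoef : (0:ℝ) ≤ 2 * ((a 1)⁻¹ * C) :=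
      mul_nonneg (by norm_num) (mul_nonneg (inv_nonneg.2 ha1.le) hCnn)
    refine step1.trans ?_
    rw [step2]
    have h1 := mul_le_mul_of_nonneg_left hJ hcoef
    have h2 := mul_le_mul_of_nonneg_left hvol1
      (mul_nonneg (by norm_num : (0:ℝ) ≤ 2) hEnn)
    nlinarith [h1, h2]
  -- (H3) E ≤ 2 B + 2 (1/(2-K)) (a1⁻¹ C)
  have hgconst : IntegrableOn (fun _ : ℝ => u' 1) (Set.Ioo (0:ℝ) 1) :=
    integrableOn_const hvol01.ne
  have hgint : IntegrableOn (fun y => u' 1 - u' y) (Set.Ioo (0:ℝ) 1) := hgconst.sub hu'L1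
  have habs : ∫ y in Set.Ioo (0:ℝ) 1, |u' 1 - u' y| ≤
      Real.sqrt (1 / (2 - K)) * Real.sqrt ((a 1)⁻¹ * C) := by
    apply aux_lim hgint.abs
    intro ε hε0 hε1
    have hFc : ContinuousOn (fun y => ∫ t in y..1, t ^ (-K)) (Set.Icc ε 1) := fun y hy =>
      ((aux_F_hasDeriv y (lt_of_lt_of_le hε0 hy.1)).continuousAt).continuousWithinAt
    have hsFc : ContinuousOn (fun y => Real.sqrt (∫ t in y..1, t ^ (-K))) (Set.Icc ε 1) :=
      Real.continuous_sqrt.comp_continuousOn hFc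
    have hFi : IntegrableOn (fun y => ∫ t in y..1, t ^ (-K)) (Set.Ioo ε 1) :=
      (hFc.integrableOn_Icc).mono_set Set.Ioo_subset_Icc_self
    have hvol : volume (Set.Ioo ε 1) < ⊤ := by
      rw [Real.volume_Ioo]; exact ENNReal.ofReal_lt_top
    have hsubε : Set.Ioo ε 1 ⊆ Set.Ioo (0:ℝ) 1 := fun t ht => ⟨lt_trans hε0 ht.1, ht.2⟩
    have step1 : ∫ y in Set.Ioo ε 1, |u' 1 - u' y| ≤
        ∫ y in Set.Ioo ε 1, Real.sqrt (∫ t in y..1, t ^ (-K)) * Real.sqrt ((a 1)⁻¹ * C) := by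
      apply setIntegral_mono_on ((hgint.mono_set hsubε).abs)
        (((hsFc.mul continuousOn_const).integrableOn_Icc).mono_set Set.Ioo_subset_Icc_self)
        measurableSet_Ioo
      intro y hy
      have hy' : y ∈ Set.Ioo (0:ℝ) 1 := hsubε hy
      have hI := hu'AC y ⟨hy'.1, hy'.2.le⟩ 1 ⟨one_pos, le_rfl⟩
      have hq := hsq' y hy'
      rw [hI]
      have h1 : |∫ t in y..1, u'' t| ≤
          Real.sqrt ((∫ t in y..1, t ^ (-K)) * ((a 1)⁻¹ * C)) := Real.abs_le_sqrt hq
      rwa [Real.sqrt_mul (aux_F_nonneg hy'.1 hy'.2.le)] at h1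
    rw [integral_mul_const] at step1
    refine step1.trans ?_
    have hFnn' : ∀ y ∈ Set.Ioo ε 1, 0 ≤ (∫ t in y..1, t ^ (-K)) := fun y hy =>
      aux_F_nonneg (lt_trans hε0 hy.1) hy.2.le
    have honeInt : IntegrableOn (fun _ : ℝ => (1:ℝ)) (Set.Ioo ε 1) :=
      integrableOn_const hvol.ne
    have hCS := cs_integral (μ := volume.restrict (Set.Ioo ε 1))
      (f := fun y => Real.sqrt (∫ t in y..1, t ^ (-K)))
      (g := fun _ => (1:ℝ))
      ((hsFc.mono Set.Ioo_subset_Icc_self).aestronglyMeasurable measurableSet_Ioo)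
      aestronglyMeasurable_const
      (((hsFc.pow 2).integrableOn_Icc).mono_set Set.Ioo_subset_Icc_self)
      (by simpa using honeInt)
    simp only [mul_one, one_pow] at hCS
    have hsqF : ∫ y in Set.Ioo ε 1, (Real.sqrt (∫ t in y..1, t ^ (-K))) ^ 2
        = ∫ y in Set.Ioo ε 1, (∫ t in y..1, t ^ (-K)) :=
      setIntegral_congr_fun measurableSet_Ioo (fun y hy => Real.sq_sqrt (hFnn' y hy))
    have hone : ∫ _ in Set.Ioo ε 1, (1:ℝ) = 1 - ε := by
      rw [setIntegral_const, smul_eq_mul, Real.volume_real_Ioo,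
        max_eq_left (by linarith), mul_one]
    rw [hsqF, hone] at hCS
    have hJ := aux_F_integral hK2 hε0 hε1
    have hFInn : 0 ≤ ∫ y in Set.Ioo ε 1, (∫ t in y..1, t ^ (-K)) :=
      setIntegral_nonneg measurableSet_Ioo hFnn'
    have hsFnn : 0 ≤ ∫ y in Set.Ioo ε 1, Real.sqrt (∫ t in y..1, t ^ (-K)) :=
      setIntegral_nonneg measurableSet_Ioo (fun y _ => Real.sqrt_nonneg _)
    have hle : (∫ y in Set.Ioo ε 1, Real.sqrt (∫ t in y..1, t ^ (-K))) ^ 2 ≤ 1 / (2 - K) := by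
      nlinarith [hCS, hJ, hFInn]
    have hle2 : ∫ y in Set.Ioo ε 1, Real.sqrt (∫ t in y..1, t ^ (-K))
        ≤ Real.sqrt (1 / (2 - K)) := by
      rw [show (1:ℝ) / (2 - K) = Real.sqrt (1 / (2 - K)) ^ 2 from
        (Real.sq_sqrt (by positivity)).symm] at hle
      exact abs_le_of_sq_le_sq' hle (Real.sqrt_nonneg _) |>.2
    exact mul_le_mul_of_nonneg_right hle2 (Real.sqrt_nonneg _)
  have hsplit : ∫ y in Set.Ioo (0:ℝ) 1, (u' 1 - u' y) =
      u' 1 - ∫ y in Set.Ioo (0:ℝ) 1, u' y := by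
    rw [integral_sub hgconst hu'L1, setIntegral_const, smul_eq_mul, Real.volume_real_Ioo]
    norm_num
  have hgabs : |∫ y in Set.Ioo (0:ℝ) 1, (u' 1 - u' y)| ≤
      ∫ y in Set.Ioo (0:ℝ) 1, |u' 1 - u' y| := by
    simpa [Real.norm_eq_abs] using norm_integral_le_integral_norm
      (μ := volume.restrict (Set.Ioo (0:ℝ) 1)) (fun y => u' 1 - u' y)
  have hsq2 : (∫ y in Set.Ioo (0:ℝ) 1, (u' 1 - u' y)) ^ 2 ≤ (1 / (2 - K)) * ((a 1)⁻¹ * C) := by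
    have habsnn : 0 ≤ ∫ y in Set.Ioo (0:ℝ) 1, |u' 1 - u' y| :=
      setIntegral_nonneg measurableSet_Ioo (fun y _ => abs_nonneg _)
    have h3 : (Real.sqrt (1 / (2 - K)) * Real.sqrt ((a 1)⁻¹ * C)) ^ 2
        = (1 / (2 - K)) * ((a 1)⁻¹ * C) := by
      rw [mul_pow, Real.sq_sqrt (by positivity),
        Real.sq_sqrt (mul_nonneg (inv_nonneg.2 ha1.le) hCnn)]
    calc (∫ y in Set.Ioo (0:ℝ) 1, (u' 1 - u' y)) ^ 2
        = |∫ y in Set.Ioo (0:ℝ) 1, (u' 1 - u' y)| ^ 2 := (sq_abs _).symm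
      _ ≤ (∫ y in Set.Ioo (0:ℝ) 1, |u' 1 - u' y|) ^ 2 :=
          pow_le_pow_left₀ (abs_nonneg _) hgabs 2
      _ ≤ (Real.sqrt (1 / (2 - K)) * Real.sqrt ((a 1)⁻¹ * C)) ^ 2 :=
          pow_le_pow_left₀ habsnn habs 2
      _ = _ := h3
  have hu'CS : (∫ y in Set.Ioo (0:ℝ) 1, u' y) ^ 2 ≤ B := by
    have honeInt : IntegrableOn (fun _ : ℝ => (1:ℝ)) (Set.Ioo (0:ℝ) 1) :=
      integrableOn_const hvol01.ne
    have hCS := cs_integral (μ := volume.restrict (Set.Ioo (0:ℝ) 1))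
      (f := u') (g := fun _ => (1:ℝ))
      hu'L1.aestronglyMeasurable aestronglyMeasurable_const hu'L2 (by simpa using honeInt)
    simp only [mul_one, one_pow] at hCS
    have hone : ∫ _ in Set.Ioo (0:ℝ) 1, (1:ℝ) = 1 := by
      rw [setIntegral_const, smul_eq_mul, Real.volume_real_Ioo]
      norm_num
    rw [hone, mul_one] at hCS
    exact hCS
  have hE3 : (u' 1) ^ 2 ≤ 2 * B + 2 * ((1 / (2 - K)) * ((a 1)⁻¹ * C)) := by
    have hkey : u' 1 = (∫ y in Set.Ioo (0:ℝ) 1, u' y)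
        + (∫ y in Set.Ioo (0:ℝ) 1, (u' 1 - u' y)) := by
      rw [hsplit]; ring
    rw [hkey]
    nlinarith [hsq2, hu'CS,
      sq_nonneg ((∫ y in Set.Ioo (0:ℝ) 1, u' y) - (∫ y in Set.Ioo (0:ℝ) 1, (u' 1 - u' y)))]
  -- (H1) A ≤ B
  have hAB : A ≤ B := by
    have hub : ∀ x ∈ Set.Ioo (0:ℝ) 1, (u x) ^ 2 ≤ B := by
      intro x hx
      have hux : u x = ∫ t in Set.Ioo (0:ℝ) x, u' t := by
        have h := huAC 0 ⟨le_rfl, zero_le_one⟩ x ⟨hx.1.le, hx.2.le⟩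
        rw [hu0, sub_zero] at h
        rw [h, intervalIntegral.integral_of_le hx.1.le,
          MeasureTheory.integral_Ioc_eq_integral_Ioo]
      have hsub : Set.Ioo (0:ℝ) x ⊆ Set.Ioo (0:ℝ) 1 :=
        Set.Ioo_subset_Ioo le_rfl hx.2.le
      have hvolx : volume (Set.Ioo (0:ℝ) x) < ⊤ := by
        rw [Real.volume_Ioo]; exact ENNReal.ofReal_lt_top
      have honeInt : IntegrableOn (fun _ : ℝ => (1:ℝ)) (Set.Ioo (0:ℝ) x) :=
        integrableOn_const hvolx.ne
      have hCS := cs_integral (μ := volume.restrict (Set.Ioo (0:ℝ) x))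
        (f := u') (g := fun _ => (1:ℝ))
        (hu'L1.aestronglyMeasurable.mono_measure (Measure.restrict_mono hsub le_rfl))
        aestronglyMeasurable_const (hu'L2.mono_set hsub) (by simpa using honeInt)
      simp only [mul_one, one_pow] at hCS
      have hone : ∫ _ in Set.Ioo (0:ℝ) x, (1:ℝ) = x := by
        rw [setIntegral_const, smul_eq_mul, Real.volume_real_Ioo,
          max_eq_left (by linarith [hx.1]), mul_one, sub_zero]
      rw [hone] at hCS
      have h1 : ∫ t in Set.Ioo (0:ℝ) x, (u' t) ^ 2 ≤ B := by
        apply setIntegral_mono_set hu'L2 ?_ (HasSubset.Subset.eventuallyLE hsub)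
        exact (ae_restrict_iff' measurableSet_Ioo).2
          (Eventually.of_forall fun t _ => sq_nonneg _)
      have h2 : 0 ≤ ∫ t in Set.Ioo (0:ℝ) x, (u' t) ^ 2 :=
        setIntegral_nonneg measurableSet_Ioo (fun t _ => sq_nonneg _)
      rw [hux]
      refine hCS.trans ?_
      have k1 := mul_le_mul_of_nonneg_right h1 hx.1.le
      have k2 := mul_le_mul_of_nonneg_left hx.2.le hBnn
      linarith
    have hBi : IntegrableOn (fun _ : ℝ => B) (Set.Ioo (0:ℝ) 1) :=
      integrableOn_const hvol01.ne
    have := setIntegral_mono_on huL2 hBi measurableSet_Ioo hub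
    rwa [setIntegral_const, smul_eq_mul, Real.volume_real_Ioo, sub_zero,
      max_eq_left zero_le_one, one_mul] at this
  -- final algebra
  have hcne : (a 1 * (2 - K)) ≠ 0 := by positivity
  have hconv : 2 * ((a 1)⁻¹ * C) * (1 / (2 - K)) = 2 * (C / (a 1 * (2 - K))) := by
    rw [one_div, div_eq_mul_inv, mul_inv]
    ring
  have hconv2 : 2 * ((1 / (2 - K)) * ((a 1)⁻¹ * C)) = 2 * (C / (a 1 * (2 - K))) := by
    rw [one_div, div_eq_mul_inv, mul_inv]
    ring
  have hB2' : B ≤ 2 * ((u' 1) ^ 2 + C / (a 1 * (2 - K))) := by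
    rw [hconv] at hB2
    linarith
  have hE3' : (u' 1) ^ 2 ≤ 2 * B + 2 * (C / (a 1 * (2 - K))) := by
    rw [hconv2] at hE3
    linarith
  have hdnn : 0 ≤ C / (a 1 * (2 - K)) := div_nonneg hCnn (by positivity)
  clear_value A B C
  refine ⟨⟨hAB, ?_, ?_⟩, ?_, ?_, ?_⟩
  · linarith
  · have hm1 : (1:ℝ) ≤ max 1 (1 / (a 1 * (2 - K))) := le_max_left _ _
    have hm2 : 1 / (a 1 * (2 - K)) ≤ max 1 (1 / (a 1 * (2 - K))) := le_max_right _ _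
    have h1 := mul_le_mul_of_nonneg_left hm1 hEnn
    have h2 := mul_le_mul_of_nonneg_left hm2 hCnn
    have h3 : C / (a 1 * (2 - K)) = C * (1 / (a 1 * (2 - K))) := by ring
    nlinarith [h1, h2]
  · have hm1 : (2:ℝ) ≤ max 2 (1 + 2 / (a 1 * (2 - K))) := le_max_left _ _
    have hm2 : 1 + 2 / (a 1 * (2 - K)) ≤ max 2 (1 + 2 / (a 1 * (2 - K))) := le_max_right _ _
    have h1 := mul_le_mul_of_nonneg_left hm1 hEnn
    have h2 := mul_le_mul_of_nonneg_left hm2 hCnn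
    have h3 : C * (1 + 2 / (a 1 * (2 - K))) = C + 2 * (C / (a 1 * (2 - K))) := by ring
    linarith
  · have hm1 : (4:ℝ) ≤ max 4 (4 / (a 1 * (2 - K)) + 1) := le_max_left _ _
    have hm2 : 4 / (a 1 * (2 - K)) + 1 ≤ max 4 (4 / (a 1 * (2 - K)) + 1) := le_max_right _ _
    have h1 := mul_le_mul_of_nonneg_left hm1 hEnn
    have h2 := mul_le_mul_of_nonneg_left hm2 hCnn
    have h3 : C * (4 / (a 1 * (2 - K)) + 1) = C + 4 * (C / (a 1 * (2 - K))) := by ring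
    linarith
  · have hm1 : (2:ℝ) ≤ max (2 / (a 1 * (2 - K)) + 1) 2 := le_max_right _ _
    have hm2 : 2 / (a 1 * (2 - K)) + 1 ≤ max (2 / (a 1 * (2 - K)) + 1) 2 := le_max_left _ _
    have h1 := mul_le_mul_of_nonneg_left hm1 hBnn
    have h2 := mul_le_mul_of_nonneg_left hm2 hCnn
    have h3 : 0 ≤ A * max (2 / (a 1 * (2 - K)) + 1) 2 :=
      mul_nonneg hAnn (le_trans (by norm_num) (le_max_right _ _))
    have h4 : C * (2 / (a 1 * (2 - K)) + 1) = C + 2 * (C / (a 1 * (2 - K))) := by ring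
    linarith
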